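/- For every integer n ≥ 2: there exist ν₁ ≠ ν₂ ∈ RER_[n] such that Φ_p(ν₁) = Φ_p(ν₂) for all p ∈ [0,1] if and only if n ≥ 4. -/

import Mathlib

open scoped Classical BigOperators

noncomputable instance (n : ℕ) : Fintype (Setoid (Fin n)) :=
  Fintype.ofInjective (fun s : Setoid (Fin n) => s.r)
    (fun s t h => Setoid.ext fun a b => iff_of_eq (congrFun (congrFun h a) b))

/-- The weight a single block `B` receives in the color-process formula:
`p · 1[x ≡ 1 on B] + (1-p) · 1[x ≡ 0 on B]`. -/
noncomputable def blockW (n : ℕ) (p : ℝ) (x : Fin n → Bool) (B : Set (Fin n)) : ℝ :=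
  (if ∀ i ∈ B, x i = true then p else 0) + (if ∀ i ∈ B, x i = false then 1 - p else 0)

/-- The probability that the color process of the deterministic partition `π` equals `x`. -/
noncomputable def partW (n : ℕ) (p : ℝ) (π : Setoid (Fin n)) (x : Fin n → Bool) : ℝ :=
  ∏ᶠ B ∈ π.classes, blockW n p x B

/-- The color process `Φ_p(ν)` on `{0,1}^n`, given by its probability mass function. -/
noncomputable def Phi (n : ℕ) (p : ℝ) (ν : Setoid (Fin n) → ℝ) : (Fin n → Bool) → ℝ :=
  fun x => ∑ π : Setoid (Fin n), ν π * partW n p π x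

/-- `ν` is a probability measure on the set of partitions of `{1,…,n}` (an RER). -/
def IsRER (n : ℕ) (ν : Setoid (Fin n) → ℝ) : Prop :=
  (∀ π, 0 ≤ ν π) ∧ ∑ π : Setoid (Fin n), ν π = 1

/-- The action of a permutation of `{1,…,n}` on partitions of `{1,…,n}`. -/
def permSetoid {n : ℕ} (σ : Equiv.Perm (Fin n)) (π : Setoid (Fin n)) : Setoid (Fin n) where
  r a b := π.r (σ.symm a) (σ.symm b)
  iseqv := ⟨fun _ => π.iseqv.refl _, fun h => π.iseqv.symm h, fun h h' => π.iseqv.trans h h'⟩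

/-- `ν` is exchangeable: invariant under every permutation of `{1,…,n}`. -/
def IsExch (n : ℕ) (ν : Setoid (Fin n) → ℝ) : Prop :=
  ∀ (σ : Equiv.Perm (Fin n)) (π : Setoid (Fin n)), ν (permSetoid σ π) = ν π


section Aux
variable {n : ℕ} {p : ℝ} {x : Fin n → Bool}

lemma blockW_empty : blockW n p x ∅ = 1 := by simp [blockW]

lemma blockW_of_true {B : Set (Fin n)} (h1 : ∀ i ∈ B, x i = true)
    (h2 : ¬ ∀ i ∈ B, x i = false) : blockW n p x B = p := by
  rw [blockW, if_pos h1, if_neg h2, add_zero]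

lemma blockW_of_false {B : Set (Fin n)} (h1 : ¬ ∀ i ∈ B, x i = true)
    (h2 : ∀ i ∈ B, x i = false) : blockW n p x B = 1 - p := by
  rw [blockW, if_pos h2, if_neg h1, zero_add]

lemma blockW_of_mixed {B : Set (Fin n)} (h1 : ¬ ∀ i ∈ B, x i = true)
    (h2 : ¬ ∀ i ∈ B, x i = false) : blockW n p x B = 0 := by
  rw [blockW, if_neg h1, if_neg h2, add_zero]

lemma blockW_singleton (i : Fin n) :
    blockW n p x {i} = if x i = true then p else 1 - p := by
  rcases h : x i with _ | _
  · rw [if_neg (by simp [h])]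
    exact blockW_of_false (by simp [h]) (by simp [h])
  · rw [if_pos (by simp [h])]
    exact blockW_of_true (by simp [h]) (by simp [h])

lemma blockW_pair (a b : Fin n) :
    blockW n p x {a, b} =
      (if x a = true ∧ x b = true then p else 0) +
      (if x a = false ∧ x b = false then 1 - p else 0) := by
  rw [blockW]
  congr 1 <;> congr 1 <;> simp [Set.forall_mem_insert] <;> tauto

lemma partW_ker (g : Fin n → Fin n) :
    partW n p (Setoid.ker g) x = ∏ c : Fin n, blockW n p x (g ⁻¹' {c}) := by
  have hcl : (Setoid.ker g).classes = (fun c => g ⁻¹' {c}) '' Set.range g := by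
    ext s
    constructor
    · rintro ⟨y, rfl⟩
      exact ⟨g y, ⟨y, rfl⟩, by ext z; simp [Setoid.ker_def]⟩
    · rintro ⟨c, ⟨y, rfl⟩, rfl⟩
      exact ⟨y, by ext z; simp [Setoid.ker_def]⟩
  have hinj : Set.InjOn (fun c => g ⁻¹' {c}) (Set.range g) := by
    rintro c ⟨y, rfl⟩ c' _ h
    have hy : y ∈ g ⁻¹' {c'} := by
      simp only at h
      rw [← h]; exact rfl
    exact (Set.mem_singleton_iff.mp hy).symm ▸ rfl
  rw [partW, hcl, finprod_mem_image hinj]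
  have : ∏ᶠ c ∈ Set.range g, blockW n p x (g ⁻¹' {c})
      = ∏ᶠ c ∈ Set.univ, blockW n p x (g ⁻¹' {c}) := by
    apply finprod_mem_inter_mulSupport_eq'
    intro c hc
    simp only [Set.mem_univ, iff_true]
    by_contra hr
    have hemp : g ⁻¹' {c} = ∅ := by
      ext z; simp only [Set.mem_preimage, Set.mem_singleton_iff, Set.mem_empty_iff_false,
        iff_false]
      exact fun h => hr ⟨z, h⟩
    apply hc
    show blockW n p x (g ⁻¹' {c}) = 1
    rw [hemp]; exact blockW_empty
  rw [this, finprod_mem_univ, finprod_eq_prod_of_fintype]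

end Aux

section Pairs
variable {n : ℕ} {p : ℝ} {x : Fin n → Bool}

/-- Map `v ↦ u`, identity elsewhere: its kernel is the partition with one pair `{u,v}`. -/
def gP {n : ℕ} (u v : Fin n) : Fin n → Fin n := fun j => if j = v then u else j

/-- Map `v ↦ u, v' ↦ u'`, identity elsewhere: kernel is the partition with pairs
`{u,v}` and `{u',v'}`. -/
def gQ {n : ℕ} (u v u' v' : Fin n) : Fin n → Fin n :=
  fun j => if j = v then u else if j = v' then u' else j

lemma gP_fib_u {u v : Fin n} (huv : u ≠ v) : gP u v ⁻¹' {u} = {u, v} := by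
  ext j; simp only [gP, Set.mem_preimage, Set.mem_singleton_iff, Set.mem_insert_iff]
  split_ifs with h <;> simp [h] <;> tauto

lemma gP_fib_v {u v : Fin n} (huv : u ≠ v) : gP u v ⁻¹' {v} = ∅ := by
  ext j; simp only [gP, Set.mem_preimage, Set.mem_singleton_iff, Set.mem_empty_iff_false,
    iff_false]
  split_ifs with h <;> simp_all

lemma gP_fib_w {u v w : Fin n} (hwu : w ≠ u) (hwv : w ≠ v) : gP u v ⁻¹' {w} = {w} := by
  ext j; simp only [gP, Set.mem_preimage, Set.mem_singleton_iff]
  split_ifs with h <;> simp_all [eq_comm]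

lemma gQ_fib_u {u v u' v' : Fin n} (huv : u ≠ v) (huu' : u ≠ u') (huv' : u ≠ v') :
    gQ u v u' v' ⁻¹' {u} = {u, v} := by
  ext j; simp only [gQ, Set.mem_preimage, Set.mem_singleton_iff, Set.mem_insert_iff]
  split_ifs with h h' <;> simp_all [eq_comm] <;> tauto

lemma gQ_fib_u' {u v u' v' : Fin n} (hu'v : u' ≠ v) (hu'v' : u' ≠ v') (huu' : u ≠ u')
    (hvv' : v ≠ v') : gQ u v u' v' ⁻¹' {u'} = {u', v'} := by
  ext j; simp only [gQ, Set.mem_preimage, Set.mem_singleton_iff, Set.mem_insert_iff]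
  split_ifs with h h' <;> simp_all [eq_comm] <;> tauto

lemma gQ_fib_v {u v u' v' : Fin n} (huv : u ≠ v) (hu'v : u' ≠ v) :
    gQ u v u' v' ⁻¹' {v} = ∅ := by
  ext j; simp only [gQ, Set.mem_preimage, Set.mem_singleton_iff, Set.mem_empty_iff_false,
    iff_false]
  split_ifs with h h' <;> simp_all [eq_comm]

lemma gQ_fib_v' {u v u' v' : Fin n} (huv' : u ≠ v') (hu'v' : u' ≠ v') :
    gQ u v u' v' ⁻¹' {v'} = ∅ := by
  ext j; simp only [gQ, Set.mem_preimage, Set.mem_singleton_iff, Set.mem_empty_iff_false,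
    iff_false]
  split_ifs with h h' <;> simp_all [eq_comm]

lemma gQ_fib_w {u v u' v' w : Fin n} (h1 : w ≠ u) (h2 : w ≠ v) (h3 : w ≠ u') (h4 : w ≠ v') :
    gQ u v u' v' ⁻¹' {w} = {w} := by
  ext j; simp only [gQ, Set.mem_preimage, Set.mem_singleton_iff]
  split_ifs with h h' <;> simp_all [eq_comm]

/-- The key cancellation identity behind the non-injectivity for `n ≥ 4`. -/
lemma key_identity {a b c d : Fin n} (hab : a ≠ b) (hac : a ≠ c) (had : a ≠ d)
    (hbc : b ≠ c) (hbd : b ≠ d) (hcd : c ≠ d) (p : ℝ) (x : Fin n → Bool) :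
    partW n p (Setoid.ker (gQ a b c d)) x + partW n p (Setoid.ker (gP a c)) x
      + partW n p (Setoid.ker (gP b d)) x
    = partW n p (Setoid.ker (gQ a c b d)) x + partW n p (Setoid.ker (gP a b)) x
      + partW n p (Setoid.ker (gP c d)) x := by
  classical
  set S : Finset (Fin n) := {a, b, c, d} with hS
  have hmem : ∀ i : Fin n, i ∈ Sᶜ → (i ≠ a ∧ i ≠ b ∧ i ≠ c ∧ i ≠ d) := by
    intro i hi
    simp only [hS, Finset.mem_compl, Finset.mem_insert, Finset.mem_singleton] at hi
    tauto
  have hprod4 : ∀ F : Fin n → ℝ, ∏ i ∈ S, F i = F a * F b * F c * F d := by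
    intro F
    rw [hS]
    rw [Finset.prod_insert (by simp [hab, hac, had]),
      Finset.prod_insert (by simp [hbc, hbd]),
      Finset.prod_insert (by simp [hcd]), Finset.prod_singleton]
    ring
  have hsplit : ∀ F : Fin n → ℝ, ∏ i, F i = F a * F b * F c * F d * ∏ i ∈ Sᶜ, F i := by
    intro F
    rw [← Finset.prod_mul_prod_compl S F, hprod4]
  set R : ℝ := ∏ i ∈ Sᶜ, blockW n p x {i} with hR
  have hcompl : ∀ g : Fin n → Fin n, (∀ i : Fin n, i ∈ Sᶜ → g ⁻¹' {i} = {i}) →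
      ∏ i ∈ Sᶜ, blockW n p x (g ⁻¹' {i}) = R := by
    intro g hg
    exact Finset.prod_congr rfl fun i hi => by rw [hg i hi]
  -- compute the six partWs
  have h1 : partW n p (Setoid.ker (gQ a b c d)) x
      = blockW n p x {a, b} * 1 * blockW n p x {c, d} * 1 * R := by
    rw [partW_ker, hsplit, gQ_fib_u hab hac had, gQ_fib_u' hbc.symm hcd hac hbd,
      gQ_fib_v hab hbc.symm, gQ_fib_v' had hcd, blockW_empty,
      hcompl _ fun i hi => gQ_fib_w (hmem i hi).1 (hmem i hi).2.1 (hmem i hi).2.2.1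
        (hmem i hi).2.2.2]
  have h4 : partW n p (Setoid.ker (gQ a c b d)) x
      = blockW n p x {a, c} * blockW n p x {b, d} * 1 * 1 * R := by
    rw [partW_ker, hsplit, gQ_fib_u hac hab had, gQ_fib_u' hbc hbd hab hcd,
      gQ_fib_v hac hbc, gQ_fib_v' had hbd, blockW_empty,
      hcompl _ fun i hi => gQ_fib_w (hmem i hi).1 (hmem i hi).2.2.1 (hmem i hi).2.1
        (hmem i hi).2.2.2]
  have h2 : partW n p (Setoid.ker (gP a b)) x
      = blockW n p x {a, b} * 1 * blockW n p x {c} * blockW n p x {d} * R := by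
    rw [partW_ker, hsplit, gP_fib_u hab, gP_fib_v hab, gP_fib_w hac.symm hbc.symm,
      gP_fib_w had.symm hbd.symm, blockW_empty,
      hcompl _ fun i hi => gP_fib_w (hmem i hi).1 (hmem i hi).2.1]
  have h3 : partW n p (Setoid.ker (gP c d)) x
      = blockW n p x {a} * blockW n p x {b} * blockW n p x {c, d} * 1 * R := by
    rw [partW_ker, hsplit, gP_fib_u hcd, gP_fib_v hcd, gP_fib_w hac had,
      gP_fib_w hbc hbd, blockW_empty,
      hcompl _ fun i hi => gP_fib_w (hmem i hi).2.2.1 (hmem i hi).2.2.2]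
  have h5 : partW n p (Setoid.ker (gP a c)) x
      = blockW n p x {a, c} * blockW n p x {b} * 1 * blockW n p x {d} * R := by
    rw [partW_ker, hsplit, gP_fib_u hac, gP_fib_v hac, gP_fib_w hab.symm hbc,
      gP_fib_w had.symm hcd.symm, blockW_empty,
      hcompl _ fun i hi => gP_fib_w (hmem i hi).1 (hmem i hi).2.2.1]
  have h6 : partW n p (Setoid.ker (gP b d)) x
      = blockW n p x {a} * blockW n p x {b, d} * blockW n p x {c} * 1 * R := by
    rw [partW_ker, hsplit, gP_fib_u hbd, gP_fib_v hbd, gP_fib_w hab had,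
      gP_fib_w hbc.symm hcd, blockW_empty,
      hcompl _ fun i hi => gP_fib_w (hmem i hi).2.1 (hmem i hi).2.2.2]
  rw [h1, h2, h3, h4, h5, h6, blockW_pair, blockW_pair, blockW_pair, blockW_pair,
    blockW_singleton, blockW_singleton, blockW_singleton, blockW_singleton]
  rcases x a <;> rcases x b <;> rcases x c <;> rcases x d <;> simp <;> first | ring1 | exact Or.inl (by ring)

end Pairs

lemma ker_ne_ker {α β γ : Type*} {f : α → β} {g : α → γ} {x y : α}
    (h1 : f x = f y) (h2 : g x ≠ g y) : Setoid.ker f ≠ Setoid.ker g := by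
  intro h
  apply h2
  apply Setoid.ker_def.mp
  rw [← h]
  exact Setoid.ker_def.mpr h1


section Small

def Sb3 : Setoid (Fin 3) := Setoid.ker id
def Sp01 : Setoid (Fin 3) := Setoid.ker (gP 0 1)
def Sp02 : Setoid (Fin 3) := Setoid.ker (gP 0 2)
def Sp12 : Setoid (Fin 3) := Setoid.ker (gP 1 2)
def St3 : Setoid (Fin 3) := Setoid.ker (fun _ => (0 : Fin 3))

lemma classify3 (π : Setoid (Fin 3)) :
    π = Sb3 ∨ π = Sp01 ∨ π = Sp02 ∨ π = Sp12 ∨ π = St3 := by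
  by_cases h01 : π 0 1 <;> by_cases h02 : π 0 2 <;> by_cases h12 : π 1 2
  · -- all related : ⊤
    right; right; right; right
    apply Setoid.ext
    intro u v
    fin_cases u <;> fin_cases v <;>
      rw [St3] <;> simp only [Setoid.ker_def] <;>
      first
      | exact iff_of_true (π.iseqv.refl _) (by decide)
      | exact iff_of_true h01 (by decide)
      | exact iff_of_true h02 (by decide)
      | exact iff_of_true h12 (by decide)
      | exact iff_of_true (π.iseqv.symm h01) (by decide)
      | exact iff_of_true (π.iseqv.symm h02) (by decide)
      | exact iff_of_true (π.iseqv.symm h12) (by decide)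
  · exact absurd (π.iseqv.trans (π.iseqv.symm h01) h02) h12
  · exact absurd (π.iseqv.trans h01 h12) h02
  · -- only 01
    right; left
    apply Setoid.ext
    intro u v
    fin_cases u <;> fin_cases v <;>
      rw [Sp01] <;> simp only [Setoid.ker_def, gP] <;>
      first
      | exact iff_of_true (π.iseqv.refl _) (by decide)
      | exact iff_of_true h01 (by decide)
      | exact iff_of_true (π.iseqv.symm h01) (by decide)
      | exact iff_of_false h02 (by decide)
      | exact iff_of_false h12 (by decide)
      | exact iff_of_false (fun h => h02 (π.iseqv.symm h)) (by decide)
      | exact iff_of_false (fun h => h12 (π.iseqv.symm h)) (by decide)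
  · exact absurd (π.iseqv.trans h02 (π.iseqv.symm h12)) h01
  · -- only 02
    right; right; left
    apply Setoid.ext
    intro u v
    fin_cases u <;> fin_cases v <;>
      rw [Sp02] <;> simp only [Setoid.ker_def, gP] <;>
      first
      | exact iff_of_true (π.iseqv.refl _) (by decide)
      | exact iff_of_true h02 (by decide)
      | exact iff_of_true (π.iseqv.symm h02) (by decide)
      | exact iff_of_false h01 (by decide)
      | exact iff_of_false h12 (by decide)
      | exact iff_of_false (fun h => h01 (π.iseqv.symm h)) (by decide)
      | exact iff_of_false (fun h => h12 (π.iseqv.symm h)) (by decide)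
  · -- only 12
    right; right; right; left
    apply Setoid.ext
    intro u v
    fin_cases u <;> fin_cases v <;>
      rw [Sp12] <;> simp only [Setoid.ker_def, gP] <;>
      first
      | exact iff_of_true (π.iseqv.refl _) (by decide)
      | exact iff_of_true h12 (by decide)
      | exact iff_of_true (π.iseqv.symm h12) (by decide)
      | exact iff_of_false h01 (by decide)
      | exact iff_of_false h02 (by decide)
      | exact iff_of_false (fun h => h01 (π.iseqv.symm h)) (by decide)
      | exact iff_of_false (fun h => h02 (π.iseqv.symm h)) (by decide)
  · -- none : ⊥
    left
    apply Setoid.ext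
    intro u v
    fin_cases u <;> fin_cases v <;>
      rw [Sb3] <;> simp only [Setoid.ker_def, id] <;>
      first
      | exact iff_of_true (π.iseqv.refl _) (by decide)
      | exact iff_of_false h01 (by decide)
      | exact iff_of_false h02 (by decide)
      | exact iff_of_false h12 (by decide)
      | exact iff_of_false (fun h => h01 (π.iseqv.symm h)) (by decide)
      | exact iff_of_false (fun h => h02 (π.iseqv.symm h)) (by decide)
      | exact iff_of_false (fun h => h12 (π.iseqv.symm h)) (by decide)

end Small

def Sb2 : Setoid (Fin 2) := Setoid.ker id
def St2 : Setoid (Fin 2) := Setoid.ker (fun _ => (0 : Fin 2))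

lemma classify2 (π : Setoid (Fin 2)) : π = Sb2 ∨ π = St2 := by
  by_cases h01 : π 0 1
  · right
    apply Setoid.ext
    intro u v
    fin_cases u <;> fin_cases v <;>
      rw [St2] <;> simp only [Setoid.ker_def] <;>
      first
      | exact iff_of_true (π.iseqv.refl _) (by decide)
      | exact iff_of_true h01 (by decide)
      | exact iff_of_true (π.iseqv.symm h01) (by decide)
  · left
    apply Setoid.ext
    intro u v
    fin_cases u <;> fin_cases v <;>
      rw [Sb2] <;> simp only [Setoid.ker_def, id] <;>
      first
      | exact iff_of_true (π.iseqv.refl _) (by decide)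
      | exact iff_of_false h01 (by decide)
      | exact iff_of_false (fun h => h01 (π.iseqv.symm h)) (by decide)

lemma univ2 : (Finset.univ : Finset (Setoid (Fin 2))) = {Sb2, St2} := by
  have hne : Sb2 ≠ St2 :=
    Ne.symm (ker_ne_ker (f := fun _ => (0 : Fin 2)) (g := (id : Fin 2 → Fin 2))
      (x := 0) (y := 1) rfl (by decide))
  ext π
  simp only [Finset.mem_univ, true_iff, Finset.mem_insert, Finset.mem_singleton]
  exact classify2 π

lemma univ3 : (Finset.univ : Finset (Setoid (Fin 3))) =
    {Sb3, Sp01, Sp02, Sp12, St3} := by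
  ext π
  simp only [Finset.mem_univ, true_iff, Finset.mem_insert, Finset.mem_singleton]
  exact classify3 π

lemma ne3_b01 : Sb3 ≠ Sp01 := Ne.symm (ker_ne_ker (x := 0) (y := 1) (by decide) (by decide))
lemma ne3_b02 : Sb3 ≠ Sp02 := Ne.symm (ker_ne_ker (x := 0) (y := 2) (by decide) (by decide))
lemma ne3_b12 : Sb3 ≠ Sp12 := Ne.symm (ker_ne_ker (x := 1) (y := 2) (by decide) (by decide))
lemma ne3_bt : Sb3 ≠ St3 := Ne.symm (ker_ne_ker (x := 0) (y := 1) (by decide) (by decide))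
lemma ne3_0102 : Sp01 ≠ Sp02 := ker_ne_ker (x := 0) (y := 1) (by decide) (by decide)
lemma ne3_0112 : Sp01 ≠ Sp12 := ker_ne_ker (x := 0) (y := 1) (by decide) (by decide)
lemma ne3_01t : Sp01 ≠ St3 := Ne.symm (ker_ne_ker (x := 0) (y := 2) (by decide) (by decide))
lemma ne3_0212 : Sp02 ≠ Sp12 := ker_ne_ker (x := 0) (y := 2) (by decide) (by decide)
lemma ne3_02t : Sp02 ≠ St3 := Ne.symm (ker_ne_ker (x := 0) (y := 1) (by decide) (by decide))
lemma ne3_12t : Sp12 ≠ St3 := Ne.symm (ker_ne_ker (x := 0) (y := 1) (by decide) (by decide))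

lemma sum2 (f : Setoid (Fin 2) → ℝ) : ∑ π : Setoid (Fin 2), f π = f Sb2 + f St2 := by
  have hne : Sb2 ≠ St2 :=
    Ne.symm (ker_ne_ker (f := fun _ => (0 : Fin 2)) (g := (id : Fin 2 → Fin 2))
      (x := 0) (y := 1) rfl (by decide))
  rw [univ2, Finset.sum_insert (by simp [hne]), Finset.sum_singleton]

lemma sum3 (f : Setoid (Fin 3) → ℝ) :
    ∑ π : Setoid (Fin 3), f π = f Sb3 + f Sp01 + f Sp02 + f Sp12 + f St3 := by
  rw [univ3, Finset.sum_insert (by simp [ne3_b01, ne3_b02, ne3_b12, ne3_bt]),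
    Finset.sum_insert (by simp [ne3_0102, ne3_0112, ne3_01t]),
    Finset.sum_insert (by simp [ne3_0212, ne3_02t]),
    Finset.sum_insert (by simp [ne3_12t]), Finset.sum_singleton]
  ring

section Eval
variable {p : ℝ}

lemma partW_Sb3 (x : Fin 3 → Bool) : partW 3 p Sb3 x
    = blockW 3 p x {0} * blockW 3 p x {1} * blockW 3 p x {2} := by
  rw [Sb3, partW_ker, Fin.prod_univ_three]
  rfl

lemma partW_Sp01 (x : Fin 3 → Bool) : partW 3 p Sp01 x
    = blockW 3 p x {0, 1} * blockW 3 p x {2} := by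
  rw [Sp01, partW_ker, Fin.prod_univ_three, gP_fib_u (by decide), gP_fib_v (by decide),
    gP_fib_w (by decide) (by decide), blockW_empty]
  ring

lemma partW_Sp02 (x : Fin 3 → Bool) : partW 3 p Sp02 x
    = blockW 3 p x {0, 2} * blockW 3 p x {1} := by
  rw [Sp02, partW_ker, Fin.prod_univ_three, gP_fib_u (by decide), gP_fib_v (by decide),
    gP_fib_w (by decide) (by decide), blockW_empty]
  ring

lemma partW_Sp12 (x : Fin 3 → Bool) : partW 3 p Sp12 x
    = blockW 3 p x {0} * blockW 3 p x {1, 2} := by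
  rw [Sp12, partW_ker, Fin.prod_univ_three, gP_fib_u (by decide), gP_fib_v (by decide),
    gP_fib_w (by decide) (by decide), blockW_empty]
  ring

lemma partW_St3 (x : Fin 3 → Bool) : partW 3 p St3 x = blockW 3 p x Set.univ := by
  have f0 : (fun _ : Fin 3 => (0 : Fin 3)) ⁻¹' {0} = Set.univ := by
    ext j; simp
  have f1 : (fun _ : Fin 3 => (0 : Fin 3)) ⁻¹' {1} = ∅ := by
    ext j
    simp only [Set.mem_preimage, Set.mem_singleton_iff, Set.mem_empty_iff_false, iff_false]
    decide
  have f2 : (fun _ : Fin 3 => (0 : Fin 3)) ⁻¹' {2} = ∅ := by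
    ext j
    simp only [Set.mem_preimage, Set.mem_singleton_iff, Set.mem_empty_iff_false, iff_false]
    decide
  rw [St3, partW_ker, Fin.prod_univ_three, f0, f1, f2, blockW_empty]
  ring

lemma Phi3_eval (ν : Setoid (Fin 3) → ℝ) (x : Fin 3 → Bool) :
    Phi 3 p ν x = ν Sb3 * partW 3 p Sb3 x + ν Sp01 * partW 3 p Sp01 x
      + ν Sp02 * partW 3 p Sp02 x + ν Sp12 * partW 3 p Sp12 x
      + ν St3 * partW 3 p St3 x := by
  simp only [Phi]
  exact sum3 _

lemma partW_Sb2 (x : Fin 2 → Bool) : partW 2 p Sb2 x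
    = blockW 2 p x {0} * blockW 2 p x {1} := by
  rw [Sb2, partW_ker, Fin.prod_univ_two]
  rfl

lemma partW_St2 (x : Fin 2 → Bool) : partW 2 p St2 x = blockW 2 p x Set.univ := by
  have f0 : (fun _ : Fin 2 => (0 : Fin 2)) ⁻¹' {0} = Set.univ := by
    ext j; simp
  have f1 : (fun _ : Fin 2 => (0 : Fin 2)) ⁻¹' {1} = ∅ := by
    ext j
    simp only [Set.mem_preimage, Set.mem_singleton_iff, Set.mem_empty_iff_false, iff_false]
    decide
  rw [St2, partW_ker, Fin.prod_univ_two, f0, f1, blockW_empty]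
  ring

lemma Phi2_eval (ν : Setoid (Fin 2) → ℝ) (x : Fin 2 → Bool) :
    Phi 2 p ν x = ν Sb2 * partW 2 p Sb2 x + ν St2 * partW 2 p St2 x := by
  simp only [Phi]
  exact sum2 _

end Eval

lemma inj2 {ν₁ ν₂ : Setoid (Fin 2) → ℝ} (h1 : ∑ π : Setoid (Fin 2), ν₁ π = 1)
    (h2 : ∑ π : Setoid (Fin 2), ν₂ π = 1)
    (h : ∀ p : ℝ, 0 ≤ p → p ≤ 1 → Phi 2 p ν₁ = Phi 2 p ν₂) : ν₁ = ν₂ := by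
  have e10 : ∀ p : ℝ, 0 ≤ p → p ≤ 1 →
      ν₁ Sb2 * (p * (1 - p)) = ν₂ Sb2 * (p * (1 - p)) := by
    intro p hp hp'
    have hx := congrFun (h p hp hp') ![true, false]
    rw [Phi2_eval, Phi2_eval, partW_Sb2, partW_St2] at hx
    have b0 : blockW 2 p ![true, false] ({0} : Set (Fin 2)) = p := by
      rw [blockW_singleton]; simp
    have b1 : blockW 2 p ![true, false] ({1} : Set (Fin 2)) = 1 - p := by
      rw [blockW_singleton]; simp
    have bu : blockW 2 p ![true, false] Set.univ = 0 :=
      blockW_of_mixed (fun hh => by simpa using hh 1 (Set.mem_univ _))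
        (fun hh => by simpa using hh 0 (Set.mem_univ _))
    rw [b0, b1, bu] at hx
    linear_combination hx
  have hb : ν₁ Sb2 = ν₂ Sb2 := by
    have := e10 (1/2) (by norm_num) (by norm_num)
    linarith
  have ht : ν₁ St2 = ν₂ St2 := by
    rw [sum2] at h1 h2
    linarith
  funext π
  rcases classify2 π with rfl | rfl <;> assumption

lemma inj3 {ν₁ ν₂ : Setoid (Fin 3) → ℝ} (h1 : ∑ π : Setoid (Fin 3), ν₁ π = 1)
    (h2 : ∑ π : Setoid (Fin 3), ν₂ π = 1)
    (h : ∀ p : ℝ, 0 ≤ p → p ≤ 1 → Phi 3 p ν₁ = Phi 3 p ν₂) : ν₁ = ν₂ := by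
  have e110 : ∀ p : ℝ, 0 ≤ p → p ≤ 1 →
      ν₁ Sb3 * (p * p * (1 - p)) + ν₁ Sp01 * (p * (1 - p))
        = ν₂ Sb3 * (p * p * (1 - p)) + ν₂ Sp01 * (p * (1 - p)) := by
    intro p hp hp'
    have hx := congrFun (h p hp hp') ![true, true, false]
    rw [Phi3_eval, Phi3_eval, partW_Sb3, partW_Sp01, partW_Sp02, partW_Sp12, partW_St3] at hx
    have b0 : blockW 3 p ![true, true, false] ({0} : Set (Fin 3)) = p := by
      rw [blockW_singleton]; simp
    have b1 : blockW 3 p ![true, true, false] ({1} : Set (Fin 3)) = p := by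
      rw [blockW_singleton]; simp
    have b2 : blockW 3 p ![true, true, false] ({2} : Set (Fin 3)) = 1 - p := by
      rw [blockW_singleton]; simp
    have b01 : blockW 3 p ![true, true, false] ({0, 1} : Set (Fin 3)) = p :=
      blockW_of_true (by rintro i (rfl | rfl) <;> rfl)
        (fun hh => by simpa using hh 0 (Or.inl rfl))
    have b02 : blockW 3 p ![true, true, false] ({0, 2} : Set (Fin 3)) = 0 :=
      blockW_of_mixed (fun hh => by simpa using hh 2 (Or.inr rfl))
        (fun hh => by simpa using hh 0 (Or.inl rfl))
    have b12 : blockW 3 p ![true, true, false] ({1, 2} : Set (Fin 3)) = 0 :=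
      blockW_of_mixed (fun hh => by simpa using hh 2 (Or.inr rfl))
        (fun hh => by simpa using hh 1 (Or.inl rfl))
    have bu : blockW 3 p ![true, true, false] Set.univ = 0 :=
      blockW_of_mixed (fun hh => by simpa using hh 2 (Set.mem_univ _))
        (fun hh => by simpa using hh 0 (Set.mem_univ _))
    rw [b0, b1, b2, b01, b02, b12, bu] at hx
    linear_combination hx
  have e101 : ∀ p : ℝ, 0 ≤ p → p ≤ 1 →
      ν₁ Sb3 * (p * (1 - p) * p) + ν₁ Sp02 * (p * (1 - p))
        = ν₂ Sb3 * (p * (1 - p) * p) + ν₂ Sp02 * (p * (1 - p)) := by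
    intro p hp hp'
    have hx := congrFun (h p hp hp') ![true, false, true]
    rw [Phi3_eval, Phi3_eval, partW_Sb3, partW_Sp01, partW_Sp02, partW_Sp12, partW_St3] at hx
    have b0 : blockW 3 p ![true, false, true] ({0} : Set (Fin 3)) = p := by
      rw [blockW_singleton]; simp
    have b1 : blockW 3 p ![true, false, true] ({1} : Set (Fin 3)) = 1 - p := by
      rw [blockW_singleton]; simp
    have b2 : blockW 3 p ![true, false, true] ({2} : Set (Fin 3)) = p := by
      rw [blockW_singleton]; simp
    have b01 : blockW 3 p ![true, false, true] ({0, 1} : Set (Fin 3)) = 0 :=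
      blockW_of_mixed (fun hh => by simpa using hh 1 (Or.inr rfl))
        (fun hh => by simpa using hh 0 (Or.inl rfl))
    have b02 : blockW 3 p ![true, false, true] ({0, 2} : Set (Fin 3)) = p :=
      blockW_of_true (by rintro i (rfl | rfl) <;> rfl)
        (fun hh => by simpa using hh 0 (Or.inl rfl))
    have b12 : blockW 3 p ![true, false, true] ({1, 2} : Set (Fin 3)) = 0 :=
      blockW_of_mixed (fun hh => by simpa using hh 1 (Or.inl rfl))
        (fun hh => by simpa using hh 2 (Or.inr rfl))
    have bu : blockW 3 p ![true, false, true] Set.univ = 0 :=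
      blockW_of_mixed (fun hh => by simpa using hh 1 (Set.mem_univ _))
        (fun hh => by simpa using hh 0 (Set.mem_univ _))
    rw [b0, b1, b2, b01, b02, b12, bu] at hx
    linear_combination hx
  have e011 : ∀ p : ℝ, 0 ≤ p → p ≤ 1 →
      ν₁ Sb3 * ((1 - p) * p * p) + ν₁ Sp12 * ((1 - p) * p)
        = ν₂ Sb3 * ((1 - p) * p * p) + ν₂ Sp12 * ((1 - p) * p) := by
    intro p hp hp'
    have hx := congrFun (h p hp hp') ![false, true, true]
    rw [Phi3_eval, Phi3_eval, partW_Sb3, partW_Sp01, partW_Sp02, partW_Sp12, partW_St3] at hx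
    have b0 : blockW 3 p ![false, true, true] ({0} : Set (Fin 3)) = 1 - p := by
      rw [blockW_singleton]; simp
    have b1 : blockW 3 p ![false, true, true] ({1} : Set (Fin 3)) = p := by
      rw [blockW_singleton]; simp
    have b2 : blockW 3 p ![false, true, true] ({2} : Set (Fin 3)) = p := by
      rw [blockW_singleton]; simp
    have b01 : blockW 3 p ![false, true, true] ({0, 1} : Set (Fin 3)) = 0 :=
      blockW_of_mixed (fun hh => by simpa using hh 0 (Or.inl rfl))
        (fun hh => by simpa using hh 1 (Or.inr rfl))
    have b02 : blockW 3 p ![false, true, true] ({0, 2} : Set (Fin 3)) = 0 :=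
      blockW_of_mixed (fun hh => by simpa using hh 0 (Or.inl rfl))
        (fun hh => by simpa using hh 2 (Or.inr rfl))
    have b12 : blockW 3 p ![false, true, true] ({1, 2} : Set (Fin 3)) = p :=
      blockW_of_true (by rintro i (rfl | rfl) <;> rfl)
        (fun hh => by simpa using hh 1 (Or.inl rfl))
    have bu : blockW 3 p ![false, true, true] Set.univ = 0 :=
      blockW_of_mixed (fun hh => by simpa using hh 0 (Set.mem_univ _))
        (fun hh => by simpa using hh 1 (Set.mem_univ _))
    rw [b0, b1, b2, b01, b02, b12, bu] at hx
    linear_combination hx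
  have hA : ν₁ Sb3 = ν₂ Sb3 := by
    have E1 := e110 (1/2) (by norm_num) (by norm_num)
    have E2 := e110 (1/3) (by norm_num) (by norm_num)
    linarith
  have hB : ν₁ Sp01 = ν₂ Sp01 := by
    have E1 := e110 (1/2) (by norm_num) (by norm_num)
    linarith
  have hC : ν₁ Sp02 = ν₂ Sp02 := by
    have E1 := e101 (1/2) (by norm_num) (by norm_num)
    linarith
  have hD : ν₁ Sp12 = ν₂ Sp12 := by
    have E1 := e011 (1/2) (by norm_num) (by norm_num)
    linarith
  have hT : ν₁ St3 = ν₂ St3 := by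
    rw [sum3] at h1 h2
    linarith
  funext π
  rcases classify3 π with rfl | rfl | rfl | rfl | rfl <;> assumption

set_option maxHeartbeats 1000000 in
lemma forward_dir {n : ℕ} (hn4 : 4 ≤ n) :
    ∃ ν₁ ν₂ : Setoid (Fin n) → ℝ, IsRER n ν₁ ∧ IsRER n ν₂ ∧ ν₁ ≠ ν₂ ∧
      ∀ p : ℝ, 0 ≤ p → p ≤ 1 → Phi n p ν₁ = Phi n p ν₂ := by
  classical
  obtain ⟨a, ha⟩ : ∃ a : Fin n, a = ⟨0, by omega⟩ := ⟨_, rfl⟩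
  obtain ⟨b, hb⟩ : ∃ b : Fin n, b = ⟨1, by omega⟩ := ⟨_, rfl⟩
  obtain ⟨c, hc⟩ : ∃ c : Fin n, c = ⟨2, by omega⟩ := ⟨_, rfl⟩
  obtain ⟨d, hd⟩ : ∃ d : Fin n, d = ⟨3, by omega⟩ := ⟨_, rfl⟩
  have hab : a ≠ b := by simp [ha, hb, Fin.ext_iff]
  have hac : a ≠ c := by simp [ha, hc, Fin.ext_iff]
  have had : a ≠ d := by simp [ha, hd, Fin.ext_iff]
  have hbc : b ≠ c := by simp [hb, hc, Fin.ext_iff]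
  have hbd : b ≠ d := by simp [hb, hd, Fin.ext_iff]
  have hcd : c ≠ d := by simp [hc, hd, Fin.ext_iff]
  obtain ⟨s1, hs1⟩ : ∃ s1 : Setoid (Fin n), s1 = Setoid.ker (gQ a b c d) := ⟨_, rfl⟩
  obtain ⟨s2, hs2⟩ : ∃ s2 : Setoid (Fin n), s2 = Setoid.ker (gP a b) := ⟨_, rfl⟩
  obtain ⟨s3, hs3⟩ : ∃ s3 : Setoid (Fin n), s3 = Setoid.ker (gP c d) := ⟨_, rfl⟩
  obtain ⟨s4, hs4⟩ : ∃ s4 : Setoid (Fin n), s4 = Setoid.ker (gQ a c b d) := ⟨_, rfl⟩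
  obtain ⟨s5, hs5⟩ : ∃ s5 : Setoid (Fin n), s5 = Setoid.ker (gP a c) := ⟨_, rfl⟩
  obtain ⟨s6, hs6⟩ : ∃ s6 : Setoid (Fin n), s6 = Setoid.ker (gP b d) := ⟨_, rfl⟩
  have h12 : s1 ≠ s2 := by
    rw [hs1, hs2]
    apply ker_ne_ker (x := c) (y := d)
    · simp [gQ, hab, hac, had, hbc, hbd, hcd, hab.symm, hac.symm, had.symm, hbc.symm, hbd.symm, hcd.symm]
    · simp [gP, hab, hac, had, hbc, hbd, hcd, hab.symm, hac.symm, had.symm, hbc.symm, hbd.symm, hcd.symm]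
  have h13 : s1 ≠ s3 := by
    rw [hs1, hs3]
    apply ker_ne_ker (x := a) (y := b)
    · simp [gQ, hab, hac, had, hbc, hbd, hcd, hab.symm, hac.symm, had.symm, hbc.symm, hbd.symm, hcd.symm]
    · simp [gP, hab, hac, had, hbc, hbd, hcd, hab.symm, hac.symm, had.symm, hbc.symm, hbd.symm, hcd.symm]
  have h14 : s1 ≠ s4 := by
    rw [hs1, hs4]
    apply ker_ne_ker (x := a) (y := b)
    · simp [gQ, hab, hac, had, hbc, hbd, hcd, hab.symm, hac.symm, had.symm, hbc.symm, hbd.symm, hcd.symm]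
    · simp [gQ, hab, hac, had, hbc, hbd, hcd, hab.symm, hac.symm, had.symm, hbc.symm, hbd.symm, hcd.symm]
  obtain ⟨μ, hμdef⟩ : ∃ μ : Setoid (Fin n) → ℝ, μ = fun π =>
    (if π = s1 then 1 else 0) - (if π = s2 then 1 else 0) - (if π = s3 then 1 else 0)
      - (if π = s4 then 1 else 0) + (if π = s5 then 1 else 0) + (if π = s6 then 1 else 0)
    := ⟨_, rfl⟩
  have hμbound : ∀ π, -3 ≤ μ π ∧ μ π ≤ 3 := by
    intro π
    simp only [hμdef]
    constructor <;> split_ifs <;> norm_num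
  obtain ⟨B, hB⟩ : ∃ B : ℝ, B = (Fintype.card (Setoid (Fin n)) : ℝ) := ⟨_, rfl⟩
  have hBpos : 0 < B := by
    rw [hB]
    exact_mod_cast Fintype.card_pos_iff.mpr ⟨Setoid.ker id⟩
  obtain ⟨ν₁, hν₁⟩ : ∃ ν₁ : Setoid (Fin n) → ℝ, ν₁ = fun π => 1 / B + 1 / (4 * B) * μ π := ⟨_, rfl⟩
  obtain ⟨ν₂, hν₂⟩ : ∃ ν₂ : Setoid (Fin n) → ℝ, ν₂ = fun π => 1 / B - 1 / (4 * B) * μ π := ⟨_, rfl⟩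
  have hsum0 : ∀ s : Setoid (Fin n), ∑ π : Setoid (Fin n), (if π = s then (1:ℝ) else 0) = 1 := by
    intro s
    rw [Finset.sum_ite_eq' Finset.univ s (fun _ => (1:ℝ))]
    simp
  have hμsum : ∑ π : Setoid (Fin n), μ π = 0 := by
    simp only [hμdef]
    simp only [Finset.sum_add_distrib, Finset.sum_sub_distrib, hsum0]
    ring
  have hconst : ∑ _π : Setoid (Fin n), (1:ℝ) / B = 1 := by
    rw [Finset.sum_const, Finset.card_univ, nsmul_eq_mul, hB]
    field_simp
  refine ⟨ν₁, ν₂, ⟨?_, ?_⟩, ⟨?_, ?_⟩, ?_, ?_⟩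
  · intro π
    have := (hμbound π).1
    simp only [hν₁]
    have h4B : 0 < 4 * B := by linarith
    have : 1 / (4 * B) * μ π ≥ 1 / (4 * B) * (-3) := by
      apply mul_le_mul_of_nonneg_left this (by positivity)
    have hBB : 1 / B = 4 * (1 / (4 * B)) := by field_simp
    rw [hBB]
    have hpos : 0 < 1 / (4 * B) := by positivity
    nlinarith
  · simp only [hν₁]
    rw [Finset.sum_add_distrib, hconst, ← Finset.mul_sum, hμsum]
    ring
  · intro π
    have := (hμbound π).2
    simp only [hν₂]
    have hBB : 1 / B = 4 * (1 / (4 * B)) := by field_simp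
    rw [hBB]
    have hpos : 0 < 1 / (4 * B) := by positivity
    nlinarith
  · simp only [hν₂]
    rw [Finset.sum_sub_distrib, hconst, ← Finset.mul_sum, hμsum]
    ring
  · intro h
    have h1 : ν₁ s1 = ν₂ s1 := by rw [h]
    simp only [hν₁, hν₂] at h1
    have hμ1 : 1 ≤ μ s1 := by
      simp only [hμdef]
      simp only [if_pos rfl, if_neg h12, if_neg h13, if_neg h14]
      split_ifs <;> norm_num
    have hpos : 0 < 1 / (4 * B) := by positivity
    nlinarith
  · intro p _ _
    funext x
    have hkey := key_identity hab hac had hbc hbd hcd p x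
    have hsum1 : ∀ s : Setoid (Fin n),
        ∑ π : Setoid (Fin n), (if π = s then (1:ℝ) else 0) * partW n p π x
          = partW n p s x := by
      intro s
      simp only [ite_mul, one_mul, zero_mul]
      rw [Finset.sum_ite_eq' Finset.univ s (fun π => partW n p π x)]
      simp
    have hμK : ∑ π : Setoid (Fin n), μ π * partW n p π x = 0 := by
      simp only [hμdef]
      simp only [sub_mul, add_mul, Finset.sum_add_distrib, Finset.sum_sub_distrib, hsum1]
      rw [← hs1, ← hs2, ← hs3, ← hs4, ← hs5, ← hs6] at hkey
      linarith
    simp only [Phi, hν₁, hν₂]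
    rw [Finset.sum_congr rfl (fun π _ => by ring :
      ∀ π ∈ Finset.univ, (1 / B + 1 / (4 * B) * μ π) * partW n p π x
        = (1 / B - 1 / (4 * B) * μ π) * partW n p π x + 1 / (2 * B) * (μ π * partW n p π x))]
    rw [Finset.sum_add_distrib, ← Finset.mul_sum, hμK]
    ring

/-- **Theorem (Steif–Tykesson, Theorem 2.1(E)).**
For every integer `n ≥ 2`: there exist `ν₁ ≠ ν₂ ∈ RER_[n]` with `Φ_p(ν₁) = Φ_p(ν₂)` for all
`p ∈ [0,1]` if and only if `n ≥ 4`. -/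
theorem exists_two_RERs_same_colorProcess_forall_p_iff (n : ℕ) (hn : 2 ≤ n) :
    (∃ ν₁ ν₂ : Setoid (Fin n) → ℝ, IsRER n ν₁ ∧ IsRER n ν₂ ∧ ν₁ ≠ ν₂ ∧
        ∀ p : ℝ, 0 ≤ p → p ≤ 1 → Phi n p ν₁ = Phi n p ν₂) ↔ 4 ≤ n := by
  constructor
  · rintro ⟨ν₁, ν₂, h1, h2, hne, hPhi⟩
    by_contra h4
    have h4' : n < 4 := by omega
    interval_cases n
    · exact hne (inj2 h1.2 h2.2 hPhi)
    · exact hne (inj3 h1.2 h2.2 hPhi)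
  · exact forward_dir
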